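/- Let p be a prime, κ a positive integer not divisible by p, z, z₀ ∈ ℤ_p with z ≠ z₀, and α ∈ R = W(\bar{𝔽}_p) with α ≠ 0. Then the power series Σ_{n≥0} (b_n(pz,p) - b_n(pz₀,p))·α^{φ^n}·q^{κp^n}/(κp^n) ∈ K[[q]] (K = R[1/p]) does NOT lie in p·R[[q]]. -/

import Mathlib

open scoped Classical

/-- `R = W(\bar 𝔽_p)`, the Witt vectors of an algebraic closure of `𝔽_p`. -/
abbrev W14 (p : ℕ) [Fact p.Prime] : Type := WittVector p (AlgebraicClosure (ZMod p))

/-- `K = R[1/p]`, the fraction field of `W(\bar 𝔽_p)`. -/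
abbrev K14 (p : ℕ) [Fact p.Prime] : Type := FractionRing (W14 p)

/-- The canonical embedding `ℤ_p = W(𝔽_p) → W(\bar 𝔽_p)`. -/
noncomputable def iota14 (p : ℕ) [Fact p.Prime] : ℤ_[p] →+* W14 p :=
  (WittVector.map (algebraMap (ZMod p) (AlgebraicClosure (ZMod p)))).comp
    (WittVector.equiv p).symm.toRingHom

/-- `bZp p z n = b_{n-1}(pz, p) ∈ ℤ_p`:  `b_{-1} = 0`, `b_0 = 1`,
`b_n = ((1-x)·b_{n-1} + x·b_{n-2})/(1-yⁿ)` at `x = pz`, `y = p`. -/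
noncomputable def bZp (p : ℕ) [Fact p.Prime] (z : ℤ_[p]) : ℕ → ℤ_[p]
  | 0 => 0
  | 1 => 1
  | n + 2 => (((1 : ℤ_[p]) - p * z) * bZp p z (n + 1) + p * z * bZp p z n) *
      Ring.inverse (1 - (p : ℤ_[p]) ^ (n + 1))

/-- The power series `Σ_{n≥0} (b_n(pz,p) - b_n(pz₀,p))·α^{φⁿ}·q^{κpⁿ}/(κpⁿ) ∈ K[[q]]`. -/
noncomputable def series14 (p κ : ℕ) [Fact p.Prime] (z z₀ : ℤ_[p]) (α : W14 p) :
    PowerSeries (K14 p) :=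
  PowerSeries.mk fun m =>
    if h : ∃ n : ℕ, m = κ * p ^ n then
      algebraMap (W14 p) (K14 p)
          (iota14 p (bZp p z (h.choose + 1) - bZp p z₀ (h.choose + 1)) *
            (fun w => WittVector.frobenius w)^[h.choose] α) /
        ((κ : K14 p) * (p : K14 p) ^ h.choose)
    else 0

section AuxZp
variable (p : ℕ) [Fact p.Prime]

lemma nonunit_p_mul14 (w : ℤ_[p]) : ¬ IsUnit ((p : ℤ_[p]) * w) := by
  intro h
  have hp : IsUnit (p : ℤ_[p]) := isUnit_of_mul_isUnit_left h
  rw [PadicInt.isUnit_iff, PadicInt.norm_p] at hp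
  have h2 := (Fact.out : p.Prime).two_le
  have : (2 : ℝ) ≤ p := by exact_mod_cast h2
  rw [inv_eq_one] at hp
  linarith [hp]

lemma isUnit_one_sub_p_pow14 (k : ℕ) : IsUnit (1 - (p : ℤ_[p]) ^ (k + 1)) := by
  have : ((p : ℤ_[p]) ^ (k + 1)) = p * p ^ k := by ring
  rw [this]
  exact IsLocalRing.isUnit_one_sub_self_of_mem_nonunits _ (nonunit_p_mul14 p _)

lemma one_sub_mul_inv14 (k : ℕ) :
    (1 - (p : ℤ_[p]) ^ (k + 1)) * Ring.inverse (1 - (p : ℤ_[p]) ^ (k + 1)) = 1 :=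
  Ring.mul_inverse_cancel _ (isUnit_one_sub_p_pow14 p k)

lemma bone14 (z : ℤ_[p]) : ∀ n, ∃ c : ℤ_[p], bZp p z (n + 1) = 1 + p * c := by
  have key : ∀ n, (∃ c : ℤ_[p], bZp p z (n + 1) = 1 + p * c) ∧
      (∃ c : ℤ_[p], bZp p z (n + 2) = 1 + p * c) := by
    intro n
    induction n with
    | zero =>
      constructor
      · exact ⟨0, by simp [bZp]⟩
      · refine ⟨(1 - z) * Ring.inverse (1 - (p : ℤ_[p]) ^ (0 + 1)), ?_⟩
        have hv := one_sub_mul_inv14 p 0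
        show (((1 : ℤ_[p]) - p * z) * bZp p z 1 + p * z * bZp p z 0) *
            Ring.inverse (1 - (p : ℤ_[p]) ^ (0 + 1)) = _
        simp only [bZp, mul_one, mul_zero, add_zero]
        linear_combination hv
    | succ n ih =>
      obtain ⟨⟨c', hc'⟩, ⟨c, hc⟩⟩ := ih
      refine ⟨⟨c, hc⟩, ?_⟩
      refine ⟨((c * (1 - p * z) + p * z * c') + p ^ (n + 1)) *
        Ring.inverse (1 - (p : ℤ_[p]) ^ (n + 2)), ?_⟩
      have hv := one_sub_mul_inv14 p (n + 1)
      show (((1 : ℤ_[p]) - p * z) * bZp p z (n + 2) + p * z * bZp p z (n + 1)) *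
          Ring.inverse (1 - (p : ℤ_[p]) ^ (n + 2)) = _
      rw [hc, hc']
      linear_combination hv
  exact fun n => (key n).1

lemma bdiff14 (z z₀ : ℤ_[p]) : ∀ n, ∃ u w : ℤ_[p],
    bZp p z (n + 2) - bZp p z₀ (n + 2) = p * (z - z₀) * u ∧ u = -1 + p * w := by
  have key : ∀ n, (∃ u w : ℤ_[p],
      bZp p z (n + 2) - bZp p z₀ (n + 2) = p * (z - z₀) * u ∧ u = -1 + p * w) ∧
      (∃ u' : ℤ_[p], bZp p z (n + 1) - bZp p z₀ (n + 1) = p * (z - z₀) * u') := by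
    intro n
    induction n with
    | zero =>
      refine ⟨⟨-Ring.inverse (1 - (p : ℤ_[p]) ^ (0 + 1)),
        -Ring.inverse (1 - (p : ℤ_[p]) ^ (0 + 1)), ?_, ?_⟩, ⟨0, by simp [bZp]⟩⟩
      · have hv := one_sub_mul_inv14 p 0
        show (((1 : ℤ_[p]) - p * z) * bZp p z 1 + p * z * bZp p z 0) *
              Ring.inverse (1 - (p : ℤ_[p]) ^ (0 + 1)) -
            (((1 : ℤ_[p]) - p * z₀) * bZp p z₀ 1 + p * z₀ * bZp p z₀ 0) *
              Ring.inverse (1 - (p : ℤ_[p]) ^ (0 + 1)) = _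
        simp only [bZp, mul_one, mul_zero, add_zero]
        ring
      · have hv := one_sub_mul_inv14 p 0
        linear_combination -hv
    | succ n ih =>
      obtain ⟨⟨u, w, hu, hw⟩, ⟨u', hu'⟩⟩ := ih
      obtain ⟨c, hc⟩ := bone14 p z₀ (n + 1)
      obtain ⟨c', hc'⟩ := bone14 p z₀ n
      refine ⟨⟨((1 - p * z) * u + p * z * u' + p * (c' - c)) *
          Ring.inverse (1 - (p : ℤ_[p]) ^ (n + 2)),
        ((z + w * (1 - p * z) + z * u' + c' - c) - p ^ (n + 1)) *
          Ring.inverse (1 - (p : ℤ_[p]) ^ (n + 2)), ?_, ?_⟩, ⟨u, hu⟩⟩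
      · have hv := one_sub_mul_inv14 p (n + 1)
        show (((1 : ℤ_[p]) - p * z) * bZp p z (n + 2) + p * z * bZp p z (n + 1)) *
              Ring.inverse (1 - (p : ℤ_[p]) ^ (n + 2)) -
            (((1 : ℤ_[p]) - p * z₀) * bZp p z₀ (n + 2) + p * z₀ * bZp p z₀ (n + 1)) *
              Ring.inverse (1 - (p : ℤ_[p]) ^ (n + 2)) = _
        linear_combination (Ring.inverse (1 - (p : ℤ_[p]) ^ (n + 2)) * (1 - p * z)) * hu +
          (Ring.inverse (1 - (p : ℤ_[p]) ^ (n + 2)) * p * z) * hu' -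
          (Ring.inverse (1 - (p : ℤ_[p]) ^ (n + 2)) * p * (z - z₀)) * hc +
          (Ring.inverse (1 - (p : ℤ_[p]) ^ (n + 2)) * p * (z - z₀)) * hc'
      · have hv := one_sub_mul_inv14 p (n + 1)
        linear_combination (Ring.inverse (1 - (p : ℤ_[p]) ^ (n + 2)) * (1 - p * z)) * hw - hv
  exact fun n => (key n).1

lemma bdiff_unit14 (z z₀ : ℤ_[p]) (n : ℕ) : ∃ u : ℤ_[p], IsUnit u ∧
    bZp p z (n + 2) - bZp p z₀ (n + 2) = p * (z - z₀) * u := by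
  obtain ⟨u, w, hu, hw⟩ := bdiff14 p z z₀ n
  refine ⟨u, ?_, hu⟩
  have : u = -(1 - p * w) := by linear_combination hw
  rw [this]
  exact (IsLocalRing.isUnit_one_sub_self_of_mem_nonunits _ (nonunit_p_mul14 p w)).neg

lemma iota14_injective : Function.Injective (iota14 p) := by
  have : Function.Injective (⇑(WittVector.map (algebraMap (ZMod p) (AlgebraicClosure (ZMod p)))) ∘
      ⇑(WittVector.equiv p).symm.toRingHom) :=
    Function.Injective.comp
      (WittVector.map_injective _ (algebraMap (ZMod p) (AlgebraicClosure (ZMod p))).injective)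
      (WittVector.equiv p).symm.injective
  exact this

lemma frob_iter_pmul14 (n d : ℕ) (x : W14 p) :
    (fun w => WittVector.frobenius w)^[n] ((p : W14 p) ^ d * x) =
      (p : W14 p) ^ d * (fun w => WittVector.frobenius w)^[n] x := by
  induction n generalizing x with
  | zero => simp
  | succ n ih =>
    rw [Function.iterate_succ_apply, Function.iterate_succ_apply]
    have h1 : WittVector.frobenius ((p : W14 p) ^ d * x)
        = (p : W14 p) ^ d * WittVector.frobenius x := by
      simp [map_mul, map_pow, map_natCast]
    simp only [h1]
    exact ih _

lemma frob_iter_isUnit14 (n : ℕ) (x : W14 p) (hx : IsUnit x) :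
    IsUnit ((fun w => WittVector.frobenius w)^[n] x) := by
  induction n with
  | zero => simpa
  | succ n ih => rw [Function.iterate_succ_apply']; exact ih.map WittVector.frobenius

end AuxZp

/-- Let `p` be prime, `κ` a positive integer prime to `p`, `z ≠ z₀` in `ℤ_p` and
`0 ≠ α ∈ R = W(\bar 𝔽_p)`.  Then the series
`Σ_{n≥0} (b_n(pz,p) - b_n(pz₀,p))·α^{φⁿ}·q^{κpⁿ}/(κpⁿ) ∈ K[[q]]` does NOT lie in
`p·R[[q]]`. -/
theorem stmt_14 (p κ : ℕ) [Fact p.Prime] (hκ : 0 < κ) (hpκ : ¬ p ∣ κ)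
    (z z₀ : ℤ_[p]) (hz : z ≠ z₀) (α : W14 p) (hα : α ≠ 0) :
    ¬ ∀ m : ℕ, ∃ r : W14 p,
        PowerSeries.coeff (R := K14 p) m (series14 p κ z z₀ α)
          = algebraMap (W14 p) (K14 p) ((p : W14 p) * r) := by
  intro H
  have hpW : (p : W14 p) ≠ 0 := WittVector.p_nonzero p _
  have hinj : Function.Injective (algebraMap (W14 p) (K14 p)) :=
    IsFractionRing.injective (W14 p) (K14 p)
  -- κ is a unit
  have hκu : IsUnit (κ : ℤ_[p]) := by
    rw [PadicInt.isUnit_iff]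
    refine le_antisymm (PadicInt.norm_le_one _) (le_of_not_gt fun h => hpκ ?_)
    have h' : ‖((κ : ℤ) : ℤ_[p])‖ < 1 := by push_cast; exact h
    exact_mod_cast (PadicInt.norm_int_lt_one_iff_dvd _).mp h'
  have hκW : IsUnit (κ : W14 p) := by
    have := hκu.map (iota14 p)
    rwa [map_natCast] at this
  have hκK : (κ : K14 p) ≠ 0 := by
    have h0 : (κ : W14 p) ≠ 0 := hκW.ne_zero
    intro h
    apply h0
    apply hinj
    rw [map_natCast, map_zero]
    exact h
  have hpK : (p : K14 p) ≠ 0 := by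
    intro h
    apply hpW
    apply hinj
    rw [map_natCast, map_zero]
    exact h
  -- decompositions
  have hιz : iota14 p (z - z₀) ≠ 0 := by
    intro h
    apply hz
    have := iota14_injective p (h.trans (map_zero (iota14 p)).symm)
    exact sub_eq_zero.mp this
  obtain ⟨c, U, hU⟩ := WittVector.exists_eq_pow_p_mul' (iota14 p (z - z₀)) hιz
  obtain ⟨d, V, hV⟩ := WittVector.exists_eq_pow_p_mul' α hα
  obtain ⟨r, hr⟩ := H (κ * p ^ (c + d + 1))
  have hex : ∃ n' : ℕ, κ * p ^ (c + d + 1) = κ * p ^ n' := ⟨c + d + 1, rfl⟩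
  have hch : hex.choose = c + d + 1 := by
    have hs := hex.choose_spec
    have := Nat.eq_of_mul_eq_mul_left hκ hs
    exact (Nat.pow_right_injective (Fact.out : p.Prime).two_le this).symm
  simp only [series14, PowerSeries.coeff_mk] at hr
  rw [dif_pos hex, hch] at hr
  -- clear the denominator
  rw [div_eq_iff (mul_ne_zero hκK (pow_ne_zero _ hpK))] at hr
  have hr2 : iota14 p (bZp p z (c + d + 1 + 1) - bZp p z₀ (c + d + 1 + 1)) *
      (fun w => WittVector.frobenius w)^[c + d + 1] α
      = (p : W14 p) * r * ((κ : W14 p) * (p : W14 p) ^ (c + d + 1)) := by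
    apply hinj
    simp only [map_mul, map_pow, map_natCast]
    simp only [map_mul, map_natCast] at hr
    exact hr
  -- rewrite numerator
  obtain ⟨u, huu, hu⟩ := bdiff_unit14 p z z₀ (c + d)
  have hidx : c + d + 1 + 1 = c + d + 2 := rfl
  rw [hidx, hu] at hr2
  rw [hV, frob_iter_pmul14] at hr2
  rw [map_mul, map_mul, map_natCast, hU] at hr2
  -- hr2 : ↑p * (↑p^c * ↑U) * ι u * (↑p^d * φ^[..] ↑V) = ↑p * r * (↑κ * ↑p^(c+d+1))
  have E2 : (p : W14 p) ^ (c + d + 1) *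
      ((U : W14 p) * iota14 p u * (fun w => WittVector.frobenius w)^[c + d + 1] (V : W14 p))
      = (p : W14 p) ^ (c + d + 1) * ((p : W14 p) * (r * κ)) := by
    linear_combination hr2
  have E3 : (U : W14 p) * iota14 p u *
      (fun w => WittVector.frobenius w)^[c + d + 1] (V : W14 p)
      = (p : W14 p) * (r * κ) :=
    mul_left_cancel₀ (pow_ne_zero _ hpW) E2
  have hunit : IsUnit ((U : W14 p) * iota14 p u *
      (fun w => WittVector.frobenius w)^[c + d + 1] (V : W14 p)) :=
    (U.isUnit.mul (huu.map (iota14 p))).mul (frob_iter_isUnit14 p _ _ V.isUnit)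
  rw [E3] at hunit
  exact (WittVector.irreducible p).not_isUnit (isUnit_of_mul_isUnit_left hunit)
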